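/- Let a, b ∈ ℤ be nonzero with v₃(a) > v₃(b), and set g = gcd(a,b) and Δ = 4a³ − 27b². Then the following are equivalent: (i) the integral binary quadratic form (a/(3g))X² − (b/g)XY + (a²/(9g))Y² represents 1 or −1, i.e. there exist β₂, β₃ ∈ ℤ and s ∈ {−1, 1} with 3aβ₂² − 9bβ₂β₃ + a²β₃² = 9g·s; (ii) there exist x, y ∈ ℤ such that x² + 3Δy² = 108ag or x² + 3Δy² = −108ag, and such that 6a divides 9by + x or 6a divides 9by − x. -/

import Mathlib

/-!
Completing the square: `12a · (3aβ₂² − 9bβ₂β₃ + a²β₃²) = (6aβ₂ − 9bβ₃)² + 3Δβ₃²`. So the form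
takes the value `±9g` at `(β₂, β₃)` exactly when `(x, y) = (6aβ₂ − 9bβ₃, β₃)` solves
`x² + 3Δy² = ±108ag`, and the divisibility condition says precisely that `x` has this shape up
to sign.
-/

section CompleteSquare

variable {R : Type*} [CommRing R]

theorem twelve_mul_form_eq_sq_add (a b β₂ β₃ : R) :
    12 * a * (3 * a * β₂ ^ 2 - 9 * b * β₂ * β₃ + a ^ 2 * β₃ ^ 2) =
      (6 * a * β₂ - 9 * b * β₃) ^ 2 + 3 * (4 * a ^ 3 - 27 * b ^ 2) * β₃ ^ 2 := by
  ring

theorem form_eq_iff_sq_add_eq [IsDomain R] [CharZero R] {a : R} (ha : a ≠ 0) (b β₂ β₃ n : R) :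
    3 * a * β₂ ^ 2 - 9 * b * β₂ * β₃ + a ^ 2 * β₃ ^ 2 = n ↔
      (6 * a * β₂ - 9 * b * β₃) ^ 2 + 3 * (4 * a ^ 3 - 27 * b ^ 2) * β₃ ^ 2 = 12 * a * n := by
  rw [← twelve_mul_form_eq_sq_add, mul_right_inj' (mul_ne_zero (by norm_num) ha)]

theorem exists_sq_eq_of_dvd_add_or_dvd_sub {c u x : R} (h : c ∣ u + x ∨ c ∣ u - x) :
    ∃ k, x ^ 2 = (c * k - u) ^ 2 := by
  rcases h with ⟨k, hk⟩ | ⟨k, hk⟩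
  · exact ⟨k, by linear_combination (x + c * k - u) * hk⟩
  · exact ⟨k, by linear_combination (c * k - u - x) * hk⟩

end CompleteSquare

theorem freeness_equations_case3_general (a b : ℤ) (ha : a ≠ 0) :
    (∃ β₂ β₃ s : ℤ, (s = 1 ∨ s = -1) ∧
        3 * a * β₂ ^ 2 - 9 * b * β₂ * β₃ + a ^ 2 * β₃ ^ 2 = 9 * (Int.gcd a b : ℤ) * s) ↔
    (∃ x y : ℤ,
        (x ^ 2 + 3 * (4 * a ^ 3 - 27 * b ^ 2) * y ^ 2 = 108 * a * (Int.gcd a b : ℤ) ∨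
          x ^ 2 + 3 * (4 * a ^ 3 - 27 * b ^ 2) * y ^ 2 = -(108 * a * (Int.gcd a b : ℤ))) ∧
        (6 * a ∣ 9 * b * y + x ∨ 6 * a ∣ 9 * b * y - x)) := by
  constructor
  · rintro ⟨β₂, β₃, s, hs, he⟩
    rw [form_eq_iff_sq_add_eq ha] at he
    refine ⟨6 * a * β₂ - 9 * b * β₃, β₃, ?_, Or.inl ⟨β₂, by ring⟩⟩
    rcases hs with rfl | rfl
    · exact Or.inl (by linear_combination he)
    · exact Or.inr (by linear_combination he)
  · rintro ⟨x, y, heq, hdvd⟩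
    obtain ⟨k, hx⟩ := exists_sq_eq_of_dvd_add_or_dvd_sub hdvd
    rcases heq with h | h
    · exact ⟨k, y, 1, Or.inl rfl, (form_eq_iff_sq_add_eq ha ..).2 (by linear_combination h - hx)⟩
    · exact ⟨k, y, -1, Or.inr rfl, (form_eq_iff_sq_add_eq ha ..).2 (by linear_combination h - hx)⟩

/-- Let `a, b ∈ ℤ` be nonzero with `v₃(a) > v₃(b)`, and set `g = gcd(a,b)`,
`Δ = 4a³ − 27b²`.  The following are equivalent: (i) the quadratic form
`(a/(3g))X² − (b/g)XY + (a²/(9g))Y²` represents `1` or `−1`, i.e. there are `β₂, β₃ ∈ ℤ`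
and `s ∈ {−1,1}` with `3aβ₂² − 9bβ₂β₃ + a²β₃² = 9g·s`; (ii) there exist `x, y ∈ ℤ` with
`x² + 3Δy² = ±108ag` such that `6a ∣ 9by + x` or `6a ∣ 9by − x`. -/
theorem freeness_equations_case3 (a b : ℤ) (ha : a ≠ 0) (hb : b ≠ 0)
    (hv : padicValInt 3 b < padicValInt 3 a) :
    (∃ β₂ β₃ s : ℤ, (s = 1 ∨ s = -1) ∧
        3 * a * β₂ ^ 2 - 9 * b * β₂ * β₃ + a ^ 2 * β₃ ^ 2 = 9 * (Int.gcd a b : ℤ) * s) ↔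
    (∃ x y : ℤ,
        (x ^ 2 + 3 * (4 * a ^ 3 - 27 * b ^ 2) * y ^ 2 = 108 * a * (Int.gcd a b : ℤ) ∨
          x ^ 2 + 3 * (4 * a ^ 3 - 27 * b ^ 2) * y ^ 2 = -(108 * a * (Int.gcd a b : ℤ))) ∧
        (6 * a ∣ 9 * b * y + x ∨ 6 * a ∣ 9 * b * y - x)) :=
  freeness_equations_case3_general a b ha
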